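/- Let R be a connected ℕ-graded K-algebra admitting a presentation φ : K⟨t₁,…,tₘ⟩ → R that is a surjective K-algebra homomorphism with φ(tₖ) ∈ R₁ for every k and whose kernel is generated, as a two-sided ideal, by finitely many elements that are homogeneous with respect to the word-length grading of K⟨t₁,…,tₘ⟩. Let A be a graded skew PBW extension of R with generators x₁,…,xₙ. Then A is finitely presented: there is a surjective K-algebra homomorphism F : K⟨y₁,…,y_{m+n}⟩ → A with F(yₖ) = φ(tₖ) for 1 ≤ k ≤ m and F(y_{m+j}) = xⱼ for 1 ≤ j ≤ n, whose kernel is generated, as a two-sided ideal, by finitely many elements homogeneous with respect to the word-length grading of K⟨y₁,…,y_{m+n}⟩. Moreover, if ker φ is generated by homogeneous elements of degree 2, then ker F is generated by finitely many homogeneous elements of degree 2 (so A is a homogeneous quadratic algebra whenever R is). -/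

import Mathlib

noncomputable section

open scoped BigOperators

/-- The monomial `x₁^{α₁} ⋯ xₙ^{αₙ}` with factors in increasing index order. -/
def pbwMonomial {A : Type*} [Ring A] {n : ℕ} (x : Fin n → A) (α : Fin n → ℕ) : A :=
  (List.ofFn fun i => x i ^ α i).prod

/-- `A` is a skew PBW extension of the `K`-subalgebra `R` with generators `x i`. -/
structure IsSkewPBWExtension (K : Type*) {A : Type*} [Field K] [Ring A] [Algebra K A]
    (R : Subalgebra K A) {n : ℕ} (x : Fin n → A) : Prop where
  isBasis : ∃ b : Module.Basis (Fin n → ℕ) R A, ∀ α, (b α : A) = pbwMonomial x α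
  coeff_comm : ∀ i : Fin n, ∀ r ∈ R, r ≠ 0 →
    ∃ c ∈ R, c ≠ 0 ∧ x i * r - c * x i ∈ R
  gens_comm : ∀ i j : Fin n, ∃ c ∈ R, c ≠ 0 ∧
    ∃ r0 ∈ R, ∃ rr : Fin n → A, (∀ k, rr k ∈ R) ∧
      x j * x i - c * (x i * x j) = r0 + ∑ k, rr k * x k

/-- `A` is a graded skew PBW extension of the ℕ-graded algebra `R`,
whose grading is given by the family `RG` of `K`-subspaces of `A`. -/
structure IsGradedSkewPBWExtension (K : Type*) {A : Type*} [Field K] [Ring A] [Algebra K A]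
    (R : Subalgebra K A) (RG : ℕ → Submodule K A) {n : ℕ} (x : Fin n → A)
    extends IsSkewPBWExtension K R x : Prop where
  grading_le : ∀ p, RG p ≤ Subalgebra.toSubmodule R
  grading_sup : (⨆ p, RG p) = Subalgebra.toSubmodule R
  grading_indep : iSupIndep RG
  grading_one : (1 : A) ∈ RG 0
  grading_mul : ∀ p q : ℕ, ∀ a ∈ RG p, ∀ b ∈ RG q, a * b ∈ RG (p + q)
  sigma_delta : ∀ i : Fin n, ∃ σ : R →+* R, Function.Bijective σ ∧
    (∀ p : ℕ, ∀ r : R, (r : A) ∈ RG p → ((σ r : A) ∈ RG p)) ∧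
    ∃ δ : R → R,
      (∀ r s : R, δ (r + s) = δ r + δ s) ∧
      (∀ r s : R, δ (r * s) = σ r * δ s + δ r * s) ∧
      (∀ p : ℕ, ∀ r : R, (r : A) ∈ RG p → ((δ r : A) ∈ RG (p + 1))) ∧
      (∀ r : R, x i * (r : A) = (σ r : A) * x i + (δ r : A))
  gens_comm_graded : ∀ i j : Fin n, ∃ c : R, IsUnit c ∧ (c : A) ∈ RG 0 ∧
    ∃ r0 ∈ RG 2, ∃ rr : Fin n → A, (∀ k, rr k ∈ RG 1) ∧
      x j * x i - (c : A) * (x i * x j) = r0 + ∑ k, rr k * x k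

/-- The `p`-th graded component of a graded skew PBW extension: the `K`-span of the
elements `r · x^α` with `r ∈ R_t` and `t + |α| = p`. -/
def gradedPart (K : Type*) {A : Type*} [Field K] [Ring A] [Algebra K A]
    (RG : ℕ → Submodule K A) {n : ℕ} (x : Fin n → A) (p : ℕ) : Submodule K A :=
  Submodule.span K
    {a : A | ∃ (t : ℕ) (α : Fin n → ℕ), ∃ r ∈ RG t, t + (∑ i, α i) = p ∧ a = r * pbwMonomial x α}

/-- The word-length degree-`d` component of the free algebra `K⟨y₁,…,y_s⟩`:
the `d`-th power of the span of the generators. -/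
def wordLengthComponent (K : Type*) [Field K] (s : ℕ) (d : ℕ) :
    Submodule K (FreeAlgebra K (Fin s)) :=
  (Submodule.span K (Set.range (FreeAlgebra.ι K : Fin s → FreeAlgebra K (Fin s)))) ^ d

/-- The two-sided ideal of a `K`-algebra generated by a set `S`, viewed as the `K`-span
of all elements `a * s * b` with `s ∈ S`. -/
def twoSidedSpan (K : Type*) [Field K] {B : Type*} [Ring B] [Algebra K B] (S : Set B) :
    Submodule K B :=
  Submodule.span K {z : B | ∃ a s b, s ∈ S ∧ z = a * s * b}

/-!
Adjoin to `K⟨t₁,…,tₘ⟩` new variables `y_{m+1},…,y_{m+n}` and, besides the relations of `R`,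
lifts of the commutation rules `xᵢ r = σᵢ(r) xᵢ + δᵢ(r)` (for `r = φ tₖ`) and
`xⱼ xᵢ = c_{i,j} xᵢ xⱼ + r₀ + ∑ₖ r₁ₖ xₖ`. Modulo these relations every element of the free
algebra reduces to a PBW normal form `∑ ρ(v_α) y^α`: a generator `yᵢ` is moved into place in a
monomial by induction on the degree of the monomial and then on `i`. A normal form mapping to
`0` in `A` has all its coefficients in `ker φ`, since the `x^α` form a basis of `A` over `R`,
so the kernel is generated by the listed relations. The grading only serves to choose the lifts
homogeneous: `σᵢ` preserves and `δᵢ` raises degrees by one, `c_{i,j} ∈ R₀`, and `φ` is onto in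
every degree, so each new relation is homogeneous of degree `2`.
-/

section PBWMonomial

variable {A : Type*} [Ring A]

theorem pbwMonomial_zero {n : ℕ} (x : Fin n → A) : pbwMonomial x 0 = 1 := by
  simp [pbwMonomial]

theorem pbwMonomial_succ {n : ℕ} (x : Fin (n + 1) → A) (α : Fin (n + 1) → ℕ) :
    pbwMonomial x α = x 0 ^ α 0 * pbwMonomial (fun i => x i.succ) (fun i => α i.succ) := by
  simp [pbwMonomial, List.ofFn_succ]

theorem map_pbwMonomial {B : Type*} [Ring B] (ψ : A →+* B) {n : ℕ} (x : Fin n → A)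
    (α : Fin n → ℕ) : ψ (pbwMonomial x α) = pbwMonomial (fun i => ψ (x i)) α := by
  simp [pbwMonomial, map_list_prod, List.map_ofFn, Function.comp_def]

theorem mul_pbwMonomial_of_forall_lt {n : ℕ} (x : Fin n → A) {α : Fin n → ℕ} {j : Fin n}
    (hα : ∀ k < j, α k = 0) : x j * pbwMonomial x α = pbwMonomial x (α + Pi.single j 1) := by
  induction n with
  | zero => exact j.elim0
  | succ n ih =>
    rw [pbwMonomial_succ, pbwMonomial_succ x]
    cases j using Fin.cases with
    | zero => simp [pow_succ', mul_assoc]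
    | succ j =>
      have htail : (fun i : Fin n => (α + Pi.single j.succ 1 : Fin (n + 1) → ℕ) i.succ)
          = (fun i => α i.succ) + Pi.single j 1 := by
        funext i; simp [Pi.single_apply, Fin.succ_inj]
      have hhead : (α + Pi.single j.succ 1 : Fin (n + 1) → ℕ) 0 = α 0 := by
        simp [(Fin.succ_ne_zero j).symm]
      rw [hhead, htail, hα 0 (Fin.succ_pos j), pow_zero, one_mul, one_mul]
      exact ih (fun i => x i.succ) fun k hk => hα k.succ (Fin.succ_lt_succ_iff.2 hk)

end PBWMonomial

theorem sum_add_single_one {n : ℕ} (α : Fin n → ℕ) (j : Fin n) :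
    ∑ i, (α + Pi.single j 1 : Fin n → ℕ) i = ∑ i, α i + 1 := by
  simp [Finset.sum_add_distrib]

theorem exists_eq_add_single_of_ne_zero {n : ℕ} {α : Fin n → ℕ} (hα : α ≠ 0) :
    ∃ (j : Fin n) (α' : Fin n → ℕ), α = α' + Pi.single j 1 ∧ ∀ k < j, α' k = 0 := by
  classical
  obtain ⟨j₀, hj₀⟩ := Function.ne_iff.1 hα
  obtain ⟨j, hj, hmin⟩ := (Finset.univ.filter (α · ≠ 0)).exists_min_image id
    ⟨j₀, by simpa using hj₀⟩
  simp only [Finset.mem_filter, Finset.mem_univ, true_and, id] at hj hmin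
  refine ⟨j, α - Pi.single j 1, ?_, fun k hk => ?_⟩
  · funext k
    rcases eq_or_ne k j with rfl | hkj
    · simp; omega
    · simp [hkj]
  · have : α k = 0 := by_contra fun h => absurd (hmin k h) (not_le.2 hk)
    simp [this]

section TwoSidedSpan

variable {K : Type*} [Field K] {B : Type*} [Ring B] [Algebra K B] {S S' : Set B}

theorem subset_twoSidedSpan : S ⊆ twoSidedSpan K S :=
  fun s hs => Submodule.subset_span ⟨1, s, 1, hs, by simp⟩

theorem mul_mem_twoSidedSpan_left (u : B) {z : B} (hz : z ∈ twoSidedSpan K S) :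
    u * z ∈ twoSidedSpan K S := by
  induction hz using Submodule.span_induction with
  | mem z hz =>
    obtain ⟨a, s, b, hs, rfl⟩ := hz
    exact Submodule.subset_span ⟨u * a, s, b, hs, by simp [mul_assoc]⟩
  | zero => simp
  | add y z _ _ hy hz => rw [mul_add]; exact add_mem hy hz
  | smul c z _ hz => rw [mul_smul_comm]; exact Submodule.smul_mem _ c hz

theorem mul_mem_twoSidedSpan_right (u : B) {z : B} (hz : z ∈ twoSidedSpan K S) :
    z * u ∈ twoSidedSpan K S := by
  induction hz using Submodule.span_induction with
  | mem z hz =>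
    obtain ⟨a, s, b, hs, rfl⟩ := hz
    exact Submodule.subset_span ⟨a, s, b * u, hs, by simp [mul_assoc]⟩
  | zero => simp
  | add y z _ _ hy hz => rw [add_mul]; exact add_mem hy hz
  | smul c z _ hz => rw [smul_mul_assoc]; exact Submodule.smul_mem _ c hz

theorem twoSidedSpan_le_iff : twoSidedSpan K S ≤ twoSidedSpan K S' ↔ S ⊆ twoSidedSpan K S' := by
  refine ⟨fun h => subset_twoSidedSpan.trans h, fun h => Submodule.span_le.2 ?_⟩
  rintro z ⟨a, s, b, hs, rfl⟩
  exact mul_mem_twoSidedSpan_right b (mul_mem_twoSidedSpan_left a (h hs))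

theorem twoSidedSpan_mono (h : S ⊆ S') : twoSidedSpan K S ≤ twoSidedSpan K S' :=
  twoSidedSpan_le_iff.2 (h.trans subset_twoSidedSpan)

theorem twoSidedSpan_le_ker {A : Type*} [Ring A] [Algebra K A] (F : B →ₐ[K] A)
    (hS : ∀ s ∈ S, F s = 0) : twoSidedSpan K S ≤ (RingHom.ker F).restrictScalars K := by
  rw [twoSidedSpan, Submodule.span_le]
  rintro z ⟨a, s, b, hs, rfl⟩
  simp [hS s hs]

theorem map_mem_twoSidedSpan_image {C : Type*} [Ring C] [Algebra K C] (f : B →ₐ[K] C) {z : B}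
    (hz : z ∈ twoSidedSpan K S) : f z ∈ twoSidedSpan K (f '' S) := by
  induction hz using Submodule.span_induction with
  | mem z hz =>
    obtain ⟨a, s, b, hs, rfl⟩ := hz
    exact Submodule.subset_span ⟨f a, f s, f b, Set.mem_image_of_mem f hs, by simp⟩
  | zero => simp
  | add y z _ _ hy hz => rw [map_add]; exact add_mem hy hz
  | smul c z _ hz => rw [map_smul]; exact Submodule.smul_mem _ c hz

theorem exists_finset_mem_twoSidedSpan {z : B} (hz : z ∈ twoSidedSpan K S) :
    ∃ W : Finset B, ↑W ⊆ S ∧ z ∈ twoSidedSpan K (W : Set B) := by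
  classical
  induction hz using Submodule.span_induction with
  | mem z hz =>
    obtain ⟨a, s, b, hs, rfl⟩ := hz
    exact ⟨{s}, by simpa using hs, Submodule.subset_span ⟨a, s, b, by simp, rfl⟩⟩
  | zero => exact ⟨∅, by simp, zero_mem _⟩
  | add y z _ _ hy hz =>
    obtain ⟨W₁, hW₁, hy⟩ := hy
    obtain ⟨W₂, hW₂, hz⟩ := hz
    exact ⟨W₁ ∪ W₂, by simp [hW₁, hW₂], add_mem
      (twoSidedSpan_mono (by simp) hy) (twoSidedSpan_mono (by simp) hz)⟩
  | smul c z _ hz =>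
    obtain ⟨W, hW, hz⟩ := hz
    exact ⟨W, hW, Submodule.smul_mem _ c hz⟩

theorem exists_finset_subset_twoSidedSpan_eq {T : Finset B}
    (h : twoSidedSpan K (T : Set B) = twoSidedSpan K S) :
    ∃ W : Finset B, ↑W ⊆ S ∧ twoSidedSpan K (W : Set B) = twoSidedSpan K S := by
  classical
  have hT : ∀ U ⊆ T, ∃ W : Finset B, ↑W ⊆ S ∧ ↑U ⊆ (twoSidedSpan K (W : Set B) : Set B) := by
    intro U hU
    induction U using Finset.induction_on with
    | empty => exact ⟨∅, by simp, by simp⟩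
    | insert g U _ ih =>
      obtain ⟨W₁, hW₁, hg⟩ := exists_finset_mem_twoSidedSpan
        (h ▸ subset_twoSidedSpan (hU (Finset.mem_insert_self g U)) : g ∈ twoSidedSpan K S)
      obtain ⟨W₂, hW₂, hU'⟩ := ih ((Finset.subset_insert g U).trans hU)
      refine ⟨W₁ ∪ W₂, by simp [hW₁, hW₂], ?_⟩
      rw [Finset.coe_insert, Set.insert_subset_iff]
      exact ⟨twoSidedSpan_mono (by simp) hg,
        hU'.trans (twoSidedSpan_mono (by simp : (W₂ : Set B) ⊆ ↑(W₁ ∪ W₂)))⟩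
  obtain ⟨W, hWS, hTW⟩ := hT T subset_rfl
  exact ⟨W, hWS, le_antisymm (twoSidedSpan_mono hWS) (h ▸ twoSidedSpan_le_iff.2 hTW)⟩

end TwoSidedSpan

section WordLength

variable {K : Type*} [Field K] {s : ℕ}

theorem mul_mem_wordLengthComponent {d e : ℕ} {g g' : FreeAlgebra K (Fin s)}
    (hg : g ∈ wordLengthComponent K s d) (hg' : g' ∈ wordLengthComponent K s e) :
    g * g' ∈ wordLengthComponent K s (d + e) := by
  rw [wordLengthComponent, pow_add]
  exact Submodule.mul_mem_mul hg hg'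

theorem ι_mem_wordLengthComponent_one (i : Fin s) :
    FreeAlgebra.ι K i ∈ wordLengthComponent K s 1 := by
  rw [wordLengthComponent, pow_one]
  exact Submodule.subset_span (Set.mem_range_self i)

theorem iSup_wordLengthComponent : ⨆ d, wordLengthComponent K s d = ⊤ := by
  rw [eq_top_iff]
  rintro u -
  induction u using FreeAlgebra.induction with
  | grade0 r =>
    refine Submodule.mem_iSup_of_mem 0 ?_
    rw [wordLengthComponent, pow_zero]
    exact Submodule.algebraMap_mem r
  | grade1 i => exact Submodule.mem_iSup_of_mem 1 (ι_mem_wordLengthComponent_one i)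
  | add a b ha hb => exact add_mem ha hb
  | mul a b ha hb =>
    obtain ⟨f, hf, rfl⟩ := (Submodule.mem_iSup_iff_exists_finsupp _ a).1 ha
    obtain ⟨g, hg, rfl⟩ := (Submodule.mem_iSup_iff_exists_finsupp _ b).1 hb
    rw [Finsupp.sum, Finsupp.sum, Finset.sum_mul_sum]
    exact Submodule.sum_mem _ fun d _ => Submodule.sum_mem _ fun e _ =>
      Submodule.mem_iSup_of_mem (d + e) (mul_mem_wordLengthComponent (hf d) (hg e))

variable {A : Type*} [Ring A] [Algebra K A] {G : ℕ → Submodule K A}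

theorem map_mem_of_mem_wordLengthComponent (hone : (1 : A) ∈ G 0)
    (hmul : ∀ p q : ℕ, ∀ a ∈ G p, ∀ b ∈ G q, a * b ∈ G (p + q))
    (ψ : FreeAlgebra K (Fin s) →ₐ[K] A) (hψ : ∀ i, ψ (FreeAlgebra.ι K i) ∈ G 1) {d : ℕ}
    {g : FreeAlgebra K (Fin s)} (hg : g ∈ wordLengthComponent K s d) : ψ g ∈ G d := by
  have hspan : Submodule.span K (Set.range (FreeAlgebra.ι K : Fin s → FreeAlgebra K (Fin s)))
      ≤ (G 1).comap ψ.toLinearMap :=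
    Submodule.span_le.2 (Set.range_subset_iff.2 hψ)
  induction hg using Submodule.pow_induction_on_left' with
  | algebraMap r =>
    rw [AlgHom.commutes, Algebra.algebraMap_eq_smul_one]
    exact Submodule.smul_mem _ r hone
  | add a b d _ _ ha hb => rw [map_add]; exact add_mem ha hb
  | mem_mul a ha d b _ hb =>
    rw [map_mul, Nat.succ_eq_one_add]
    exact hmul 1 d _ (hspan ha) _ hb

theorem map_mem_wordLengthComponent {s' : ℕ}
    (ψ : FreeAlgebra K (Fin s) →ₐ[K] FreeAlgebra K (Fin s'))
    (hψ : ∀ i, ψ (FreeAlgebra.ι K i) ∈ wordLengthComponent K s' 1) {d : ℕ}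
    {g : FreeAlgebra K (Fin s)} (hg : g ∈ wordLengthComponent K s d) :
    ψ g ∈ wordLengthComponent K s' d :=
  map_mem_of_mem_wordLengthComponent
    (by rw [wordLengthComponent, pow_zero]; exact Submodule.one_le.1 le_rfl)
    (fun _ _ _ ha _ hb => mul_mem_wordLengthComponent ha hb) ψ hψ hg

theorem exists_mem_wordLengthComponent_eq (hindep : iSupIndep G) (hone : (1 : A) ∈ G 0)
    (hmul : ∀ p q : ℕ, ∀ a ∈ G p, ∀ b ∈ G q, a * b ∈ G (p + q))
    (ψ : FreeAlgebra K (Fin s) →ₐ[K] A) (hψ : ∀ i, ψ (FreeAlgebra.ι K i) ∈ G 1) {d : ℕ}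
    {a : A} (ha : a ∈ G d) (haψ : a ∈ Set.range ψ) :
    ∃ v ∈ wordLengthComponent K s d, ψ v = a := by
  obtain ⟨u, rfl⟩ := haψ
  have hu : u ∈ ⨆ e, wordLengthComponent K s e := by simp [iSup_wordLengthComponent]
  obtain ⟨f, hf, rfl⟩ := (Submodule.mem_iSup_iff_exists_finsupp _ u).1 hu
  have hψf : ∀ e, ψ (f e) ∈ G e := fun e =>
    map_mem_of_mem_wordLengthComponent hone hmul ψ hψ (hf e)
  refine ⟨f d, hf d, (sub_eq_zero.1 <| Submodule.disjoint_def.1 (hindep d) _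
    (sub_mem (hψf d) ha) ?_)⟩
  -- the other homogeneous components of `u` account for the difference
  rw [map_finsuppSum, ← Finsupp.add_sum_erase' f d (fun _ v => ψ v) (fun _ => map_zero ψ),
    sub_add_cancel_left, neg_mem_iff]
  refine Submodule.sum_mem _ fun e he => ?_
  have hed : e ≠ d := by rintro rfl; simp at he
  rw [Finsupp.erase_ne hed]
  exact Submodule.mem_iSup_of_mem e (Submodule.mem_iSup_of_mem hed (hψf e))

end WordLength

section NormalForm

variable {K B C : Type*} [Field K] [Ring B] [Algebra K B] [Ring C] [Algebra K C]
  (ρ : C →ₐ[K] B) {n : ℕ} (Y : Fin n → B)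

def pbwSpan (d : ℕ) : Submodule K B :=
  Submodule.span K {z | ∃ v α, ∑ i, α i ≤ d ∧ z = ρ v * pbwMonomial Y α}

def coeffCombination {ι : Type*} (e : ι → B) : (ι →₀ C) →ₗ[K] B :=
  Finsupp.lsum K fun a => (LinearMap.mulRight K (e a)).comp ρ.toLinearMap

theorem coeffCombination_apply {ι : Type*} (e : ι → B) (f : ι →₀ C) :
    coeffCombination ρ e f = ∑ a ∈ f.support, ρ (f a) * e a := by
  simp [coeffCombination, Finsupp.lsum_apply, Finsupp.sum]

theorem pbwSpan_le_range_coeffCombination (d : ℕ) :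
    pbwSpan ρ Y d ≤ LinearMap.range (coeffCombination ρ (pbwMonomial Y)) := by
  rw [pbwSpan, Submodule.span_le]
  rintro z ⟨v, α, -, rfl⟩
  exact ⟨Finsupp.single α v, by simp [coeffCombination]⟩

variable {ρ Y}

theorem pbwSpan_mono {d e : ℕ} (h : d ≤ e) : pbwSpan ρ Y d ≤ pbwSpan ρ Y e :=
  Submodule.span_mono fun _ ⟨v, α, hα, hz⟩ => ⟨v, α, hα.trans h, hz⟩

theorem pbwMonomial_mem_pbwSpan {α : Fin n → ℕ} {d : ℕ} (hα : ∑ i, α i ≤ d) :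
    pbwMonomial Y α ∈ pbwSpan ρ Y d :=
  Submodule.subset_span ⟨1, α, hα, by simp⟩

theorem one_mem_pbwSpan : (1 : B) ∈ pbwSpan ρ Y 0 := by
  simpa [pbwMonomial_zero] using pbwMonomial_mem_pbwSpan (ρ := ρ) (Y := Y) (α := 0) (by simp)

variable {S : Set B}

theorem map_mul_mem_sup_pbwSpan (u : C) {d : ℕ} {z : B}
    (hz : z ∈ twoSidedSpan K S ⊔ pbwSpan ρ Y d) :
    ρ u * z ∈ twoSidedSpan K S ⊔ pbwSpan ρ Y d := by
  obtain ⟨zI, hzI, zN, hzN, rfl⟩ := Submodule.mem_sup.1 hz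
  clear hz
  rw [mul_add]
  refine add_mem (Submodule.mem_sup_left (mul_mem_twoSidedSpan_left _ hzI))
    (Submodule.mem_sup_right ?_)
  induction hzN using Submodule.span_induction with
  | mem z hz =>
    obtain ⟨v, α, hα, rfl⟩ := hz
    exact Submodule.subset_span ⟨u * v, α, hα, by rw [map_mul, mul_assoc]⟩
  | zero => simp
  | add y z _ _ hy hz => rw [mul_add]; exact add_mem hy hz
  | smul c z _ hz => rw [mul_smul_comm]; exact Submodule.smul_mem _ c hz

theorem mul_mem_sup_pbwSpan_of_forall_pbwMonomial {i : Fin n} {d e : ℕ}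
    (hA : ∀ v, ∃ v' v'', Y i * ρ v - (ρ v' * Y i + ρ v'') ∈ twoSidedSpan K S)
    (hmon : ∀ β : Fin n → ℕ, ∑ k, β k ≤ d →
      Y i * pbwMonomial Y β ∈ twoSidedSpan K S ⊔ pbwSpan ρ Y e)
    (hde : d ≤ e) {z : B} (hz : z ∈ twoSidedSpan K S ⊔ pbwSpan ρ Y d) :
    Y i * z ∈ twoSidedSpan K S ⊔ pbwSpan ρ Y e := by
  obtain ⟨zI, hzI, zN, hzN, rfl⟩ := Submodule.mem_sup.1 hz
  clear hz
  rw [mul_add]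
  refine add_mem (Submodule.mem_sup_left (mul_mem_twoSidedSpan_left _ hzI)) ?_
  induction hzN using Submodule.span_induction with
  | mem z hz =>
    obtain ⟨v, β, hβ, rfl⟩ := hz
    obtain ⟨v', v'', hv⟩ := hA v
    have hsplit : Y i * (ρ v * pbwMonomial Y β)
        = (Y i * ρ v - (ρ v' * Y i + ρ v'')) * pbwMonomial Y β
          + ρ v' * (Y i * pbwMonomial Y β) + ρ v'' * pbwMonomial Y β := by
      noncomm_ring
    rw [hsplit]
    exact add_mem (add_mem (Submodule.mem_sup_left (mul_mem_twoSidedSpan_right _ hv))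
      (map_mul_mem_sup_pbwSpan v' (hmon β hβ)))
      (Submodule.mem_sup_right (pbwSpan_mono hde (Submodule.subset_span ⟨v'', β, hβ, rfl⟩)))
  | zero => simp
  | add y z _ _ hy hz => rw [mul_add]; exact add_mem hy hz
  | smul c z _ hz => rw [mul_smul_comm]; exact Submodule.smul_mem _ c hz

theorem ker_eq_twoSidedSpan_of_basis {A ι : Type*} [Ring A] [Algebra K A] {R : Subalgebra K A}
    (e : ι → B) (F : B →ₐ[K] A) (b : Module.Basis ι R A) (hb : ∀ a, (b a : A) = F (e a))
    (hFρ : ∀ v, F (ρ v) ∈ R) (hρ : ∀ v, F (ρ v) = 0 → ρ v ∈ twoSidedSpan K S)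
    (hS : ∀ s ∈ S, F s = 0)
    (hnf : ∀ w, w ∈ twoSidedSpan K S ⊔ LinearMap.range (coeffCombination ρ e)) :
    (RingHom.ker F).restrictScalars K = twoSidedSpan K S := by
  refine le_antisymm (fun w hw => ?_) (twoSidedSpan_le_ker F hS)
  obtain ⟨z, hz, _, ⟨f, rfl⟩, rfl⟩ := Submodule.mem_sup.1 (hnf w)
  have hFz : F z = 0 := twoSidedSpan_le_ker F hS hz
  have hsum : ∑ a ∈ f.support, (⟨F (ρ (f a)), hFρ _⟩ : R) • (b a : A) = 0 := by
    simpa [hFz, coeffCombination_apply, hb, Subalgebra.smul_def] using hw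
  have hcoeff := linearIndependent_iff'.1 b.linearIndependent _ _ hsum
  rw [coeffCombination_apply]
  refine add_mem hz (Submodule.sum_mem _ fun a ha => mul_mem_twoSidedSpan_right _ (hρ _ ?_))
  simpa using congrArg Subtype.val (hcoeff a ha)

theorem mul_pbwMonomial_mem_sup_pbwSpan
    (hA : ∀ i v, ∃ v' v'', Y i * ρ v - (ρ v' * Y i + ρ v'') ∈ twoSidedSpan K S)
    (hB : ∀ i j, ∃ (c r₀ : C) (r₁ : Fin n → C),
      Y j * Y i - (ρ c * (Y i * Y j) + ρ r₀ + ∑ k, ρ (r₁ k) * Y k) ∈ twoSidedSpan K S)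
    (d : ℕ) (i : Fin n) (α : Fin n → ℕ) (hα : ∑ k, α k ≤ d) :
    Y i * pbwMonomial Y α ∈ twoSidedSpan K S ⊔ pbwSpan ρ Y (d + 1) := by
  induction d using Nat.strong_induction_on generalizing i α with
  | _ d ihd =>
  induction i using WellFoundedLT.induction generalizing α with
  | _ i ihi =>
  rcases eq_or_ne α 0 with rfl | hα0
  · have hYi : Y i = pbwMonomial Y (Pi.single i 1) := by
      simpa [pbwMonomial_zero] using mul_pbwMonomial_of_forall_lt Y (α := 0) (j := i) (by simp)
    rw [pbwMonomial_zero, mul_one, hYi]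
    exact Submodule.mem_sup_right (pbwMonomial_mem_pbwSpan (by simp))
  obtain ⟨j, α', rfl, hα'⟩ := exists_eq_add_single_of_ne_zero hα0
  rw [sum_add_single_one] at hα
  by_cases hij : i ≤ j
  · have hbelow : ∀ k < i, (α' + Pi.single j 1 : Fin n → ℕ) k = 0 := fun k hk => by
      simp [hα' k (hk.trans_le hij), Pi.single_eq_of_ne (hk.trans_le hij).ne]
    rw [mul_pbwMonomial_of_forall_lt Y hbelow]
    exact Submodule.mem_sup_right (pbwMonomial_mem_pbwSpan
      (by rw [sum_add_single_one, sum_add_single_one]; omega))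
  -- `Y i * Y j` with `j < i` is rewritten by the relation `hB j i`
  have hlow : ∀ k, Y k * pbwMonomial Y α' ∈ twoSidedSpan K S ⊔ pbwSpan ρ Y d := fun k =>
    sup_le_sup_left (pbwSpan_mono (by omega)) _ (ihd _ (by omega) k α' le_rfl)
  obtain ⟨c, r₀, r₁, hrel⟩ := hB j i
  rw [← mul_pbwMonomial_of_forall_lt Y hα', ← mul_assoc,
    ← sub_add_cancel (Y i * Y j) (ρ c * (Y j * Y i) + ρ r₀ + ∑ k, ρ (r₁ k) * Y k)]
  simp only [add_mul, Finset.sum_mul, mul_assoc]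
  refine add_mem ?_ (add_mem (add_mem ?_ ?_) (Submodule.sum_mem _ fun k _ => ?_))
  · exact Submodule.mem_sup_left (mul_mem_twoSidedSpan_right _ hrel)
  · exact map_mul_mem_sup_pbwSpan c (mul_mem_sup_pbwSpan_of_forall_pbwMonomial (hA j)
      (fun β hβ => ihi j (lt_of_not_ge hij) β hβ) (Nat.le_succ d) (hlow i))
  · exact Submodule.mem_sup_right (Submodule.subset_span ⟨r₀, α', by omega, rfl⟩)
  · exact map_mul_mem_sup_pbwSpan _ (sup_le_sup_left (pbwSpan_mono (Nat.le_succ d)) _ (hlow k))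

theorem mul_mem_sup_pbwSpan
    (hA : ∀ i v, ∃ v' v'', Y i * ρ v - (ρ v' * Y i + ρ v'') ∈ twoSidedSpan K S)
    (hB : ∀ i j, ∃ (c r₀ : C) (r₁ : Fin n → C),
      Y j * Y i - (ρ c * (Y i * Y j) + ρ r₀ + ∑ k, ρ (r₁ k) * Y k) ∈ twoSidedSpan K S)
    (i : Fin n) {d : ℕ} {z : B}
    (hz : z ∈ twoSidedSpan K S ⊔ pbwSpan ρ Y d) :
    Y i * z ∈ twoSidedSpan K S ⊔ pbwSpan ρ Y (d + 1) :=
  mul_mem_sup_pbwSpan_of_forall_pbwMonomial (hA i)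
    (fun β hβ => mul_pbwMonomial_mem_sup_pbwSpan hA hB d i β hβ) (Nat.le_succ d) hz

end NormalForm

theorem exists_mul_map_sub_mem {K B X : Type*} [Field K] [Ring B] [Algebra K B] {S : Set B}
    (ρ : FreeAlgebra K X →ₐ[K] B) {y : B}
    (hι : ∀ k, ∃ v' v'', y * ρ (FreeAlgebra.ι K k) - (ρ v' * y + ρ v'') ∈ twoSidedSpan K S)
    (v : FreeAlgebra K X) : ∃ v' v'', y * ρ v - (ρ v' * y + ρ v'') ∈ twoSidedSpan K S := by
  induction v using FreeAlgebra.induction with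
  | grade0 r => exact ⟨algebraMap K _ r, 0, by simp [Algebra.commutes]⟩
  | grade1 k => exact hι k
  | mul a b ha hb =>
    obtain ⟨a', a'', ha⟩ := ha
    obtain ⟨b', b'', hb⟩ := hb
    refine ⟨a' * b', a' * b'' + a'' * b, ?_⟩
    have hsplit : y * ρ (a * b) - (ρ (a' * b') * y + ρ (a' * b'' + a'' * b))
        = (y * ρ a - (ρ a' * y + ρ a'')) * ρ b + ρ a' * (y * ρ b - (ρ b' * y + ρ b'')) := by
      simp only [map_mul, map_add]
      noncomm_ring
    rw [hsplit]
    exact add_mem (mul_mem_twoSidedSpan_right _ ha) (mul_mem_twoSidedSpan_left _ hb)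
  | add a b ha hb =>
    obtain ⟨a', a'', ha⟩ := ha
    obtain ⟨b', b'', hb⟩ := hb
    refine ⟨a' + b', a'' + b'', ?_⟩
    have hsplit : y * ρ (a + b) - (ρ (a' + b') * y + ρ (a'' + b''))
        = (y * ρ a - (ρ a' * y + ρ a'')) + (y * ρ b - (ρ b' * y + ρ b'')) := by
      simp only [map_add]
      noncomm_ring
    rw [hsplit]
    exact add_mem ha hb

section Presentation

variable {K A : Type*} [Field K] [Ring A] [Algebra K A] {m n : ℕ}

variable (K m n) in
def castAddHom : FreeAlgebra K (Fin m) →ₐ[K] FreeAlgebra K (Fin (m + n)) :=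
  FreeAlgebra.lift K fun k => FreeAlgebra.ι K (Fin.castAdd n k)

variable (K m) in
def natAddGen (j : Fin n) : FreeAlgebra K (Fin (m + n)) :=
  FreeAlgebra.ι K (Fin.natAdd m j)

def extendHom (φ : FreeAlgebra K (Fin m) →ₐ[K] A) (x : Fin n → A) :
    FreeAlgebra K (Fin (m + n)) →ₐ[K] A :=
  FreeAlgebra.lift K (Fin.addCases (fun k => φ (FreeAlgebra.ι K k)) x)

theorem castAddHom_ι (k : Fin m) :
    castAddHom K m n (FreeAlgebra.ι K k) = FreeAlgebra.ι K (Fin.castAdd n k) :=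
  FreeAlgebra.lift_ι_apply _ _

theorem castAddHom_mem_wordLengthComponent {d : ℕ} {g : FreeAlgebra K (Fin m)}
    (hg : g ∈ wordLengthComponent K m d) : castAddHom K m n g ∈ wordLengthComponent K (m + n) d :=
  map_mem_wordLengthComponent _
    (fun k => by rw [castAddHom_ι]; exact ι_mem_wordLengthComponent_one _) hg

variable (φ : FreeAlgebra K (Fin m) →ₐ[K] A) (x : Fin n → A)

theorem extendHom_ι_castAdd (k : Fin m) :
    extendHom φ x (FreeAlgebra.ι K (Fin.castAdd n k)) = φ (FreeAlgebra.ι K k) := by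
  rw [extendHom, FreeAlgebra.lift_ι_apply, Fin.addCases_left]

theorem extendHom_natAddGen (j : Fin n) : extendHom φ x (natAddGen K m j) = x j := by
  rw [natAddGen, extendHom, FreeAlgebra.lift_ι_apply, Fin.addCases_right]

theorem extendHom_castAddHom (v : FreeAlgebra K (Fin m)) :
    extendHom φ x (castAddHom K m n v) = φ v := by
  rw [← AlgHom.comp_apply]
  congr 1
  exact FreeAlgebra.hom_ext (funext fun k => by simp [castAddHom_ι, extendHom_ι_castAdd])

theorem extendHom_pbwMonomial (α : Fin n → ℕ) :
    extendHom φ x (pbwMonomial (natAddGen K m) α) = pbwMonomial x α := by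
  simpa [extendHom_natAddGen] using
    map_pbwMonomial (extendHom φ x : FreeAlgebra K (Fin (m + n)) →+* A) (natAddGen K m) α

theorem extendHom_surjective {R : Subalgebra K A} (b : Module.Basis (Fin n → ℕ) R A)
    (hb : ∀ α, (b α : A) = pbwMonomial x α) (hR : (R : Set A) ⊆ Set.range φ) :
    Function.Surjective (extendHom φ x) := by
  intro a
  rw [← AlgHom.mem_range, ← b.linearCombination_repr a, Finsupp.linearCombination_apply]
  refine Subalgebra.sum_mem _ fun α _ => ?_
  obtain ⟨v, hv⟩ := hR (b.repr a α).2
  refine (AlgHom.mem_range _).2 ⟨castAddHom K m n v * pbwMonomial (natAddGen K m) α, ?_⟩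
  rw [map_mul, extendHom_castAddHom, extendHom_pbwMonomial, hv, ← hb]
  rfl

theorem exists_mem_sup_pbwSpan {S : Set (FreeAlgebra K (Fin (m + n)))}
    (hA : ∀ i v, ∃ v' v'', natAddGen K m i * castAddHom K m n v
      - (castAddHom K m n v' * natAddGen K m i + castAddHom K m n v'') ∈ twoSidedSpan K S)
    (hB : ∀ i j, ∃ (c r₀ : FreeAlgebra K (Fin m)) (r₁ : Fin n → FreeAlgebra K (Fin m)),
      natAddGen K m j * natAddGen K m i - (castAddHom K m n c * (natAddGen K m i * natAddGen K m j)
        + castAddHom K m n r₀ + ∑ k, castAddHom K m n (r₁ k) * natAddGen K m k)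
        ∈ twoSidedSpan K S)
    (w : FreeAlgebra K (Fin (m + n))) :
    ∃ d, w ∈ twoSidedSpan K S ⊔ pbwSpan (castAddHom K m n) (natAddGen K m) d := by
  suffices ∀ d z, z ∈ twoSidedSpan K S ⊔ pbwSpan (castAddHom K m n) (natAddGen K m) d →
      ∃ e, w * z ∈ twoSidedSpan K S ⊔ pbwSpan (castAddHom K m n) (natAddGen K m) e by
    simpa using this 0 1 (Submodule.mem_sup_right one_mem_pbwSpan)
  induction w using FreeAlgebra.induction with
  | grade0 r => exact fun d z hz => ⟨d, by rw [← Algebra.smul_def]; exact Submodule.smul_mem _ r hz⟩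
  | grade1 k =>
    intro d z hz
    induction k using Fin.addCases with
    | left k => exact ⟨d, by rw [← castAddHom_ι]; exact map_mul_mem_sup_pbwSpan _ hz⟩
    | right j => exact ⟨d + 1, mul_mem_sup_pbwSpan hA hB j hz⟩
  | mul a b ha hb =>
    intro d z hz
    obtain ⟨e, he⟩ := hb d z hz
    obtain ⟨e', he'⟩ := ha e _ he
    exact ⟨e', by rwa [mul_assoc]⟩
  | add a b ha hb =>
    intro d z hz
    obtain ⟨e₁, he₁⟩ := ha d z hz
    obtain ⟨e₂, he₂⟩ := hb d z hz
    refine ⟨max e₁ e₂, add_mul a b z ▸ add_mem ?_ ?_⟩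
    · exact sup_le_sup_left (pbwSpan_mono (le_max_left _ _)) _ he₁
    · exact sup_le_sup_left (pbwSpan_mono (le_max_right _ _)) _ he₂

variable (K m)

/-- The lift of `xᵢ φ(tₖ) = σᵢ(φ tₖ) xᵢ + δᵢ(φ tₖ)`, where `φ (σ' i k) = σᵢ(φ tₖ)` and
`φ (δ' i k) = δᵢ(φ tₖ)`. -/
def skewRel (σ' δ' : Fin n → Fin m → FreeAlgebra K (Fin m)) (i : Fin n) (k : Fin m) :
    FreeAlgebra K (Fin (m + n)) :=
  natAddGen K m i * castAddHom K m n (FreeAlgebra.ι K k)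
    - (castAddHom K m n (σ' i k) * natAddGen K m i + castAddHom K m n (δ' i k))

/-- The lift of condition (iii), `xⱼ xᵢ = c_{i,j} xᵢ xⱼ + r₀ + ∑ₖ r₁ₖ xₖ`. -/
def genRel (c r₀ : Fin n → Fin n → FreeAlgebra K (Fin m))
    (r₁ : Fin n → Fin n → Fin n → FreeAlgebra K (Fin m)) (i j : Fin n) :
    FreeAlgebra K (Fin (m + n)) :=
  natAddGen K m j * natAddGen K m i
    - (castAddHom K m n (c i j) * (natAddGen K m i * natAddGen K m j) + castAddHom K m n (r₀ i j) + ∑ k, castAddHom K m n (r₁ i j k) * natAddGen K m k)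

variable {K m}

theorem extendHom_skewRel {σ' δ' : Fin n → Fin m → FreeAlgebra K (Fin m)}
    (hskew : ∀ i k, x i * φ (FreeAlgebra.ι K k) = φ (σ' i k) * x i + φ (δ' i k)) (i : Fin n)
    (k : Fin m) : extendHom φ x (skewRel K m σ' δ' i k) = 0 := by
  simp [skewRel, extendHom_natAddGen, extendHom_castAddHom, hskew]

theorem extendHom_genRel {c r₀ : Fin n → Fin n → FreeAlgebra K (Fin m)}
    {r₁ : Fin n → Fin n → Fin n → FreeAlgebra K (Fin m)}
    (hgen : ∀ i j, x j * x i = φ (c i j) * (x i * x j) + φ (r₀ i j) + ∑ k, φ (r₁ i j k) * x k)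
    (i j : Fin n) : extendHom φ x (genRel K m c r₀ r₁ i j) = 0 := by
  simp only [genRel, map_sub, map_add, map_mul, map_sum, extendHom_natAddGen,
    extendHom_castAddHom]
  exact sub_eq_zero.2 (hgen i j)

theorem skewRel_mem_wordLengthComponent {σ' δ' : Fin n → Fin m → FreeAlgebra K (Fin m)}
    (hσ' : ∀ i k, σ' i k ∈ wordLengthComponent K m 1)
    (hδ' : ∀ i k, δ' i k ∈ wordLengthComponent K m 2) (i : Fin n) (k : Fin m) :
    skewRel K m σ' δ' i k ∈ wordLengthComponent K (m + n) 2 :=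
  sub_mem (mul_mem_wordLengthComponent (ι_mem_wordLengthComponent_one _)
      (castAddHom_mem_wordLengthComponent (ι_mem_wordLengthComponent_one k)))
    (add_mem (mul_mem_wordLengthComponent (castAddHom_mem_wordLengthComponent (hσ' i k))
      (ι_mem_wordLengthComponent_one _)) (castAddHom_mem_wordLengthComponent (hδ' i k)))

theorem genRel_mem_wordLengthComponent {c r₀ : Fin n → Fin n → FreeAlgebra K (Fin m)}
    {r₁ : Fin n → Fin n → Fin n → FreeAlgebra K (Fin m)}
    (hc : ∀ i j, c i j ∈ wordLengthComponent K m 0)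
    (hr₀ : ∀ i j, r₀ i j ∈ wordLengthComponent K m 2)
    (hr₁ : ∀ i j k, r₁ i j k ∈ wordLengthComponent K m 1) (i j : Fin n) :
    genRel K m c r₀ r₁ i j ∈ wordLengthComponent K (m + n) 2 := by
  have hY : ∀ k, natAddGen K m k ∈ wordLengthComponent K (m + n) 1 := fun k =>
    ι_mem_wordLengthComponent_one _
  refine sub_mem (mul_mem_wordLengthComponent (hY j) (hY i)) (add_mem (add_mem ?_
    (castAddHom_mem_wordLengthComponent (hr₀ i j))) (Submodule.sum_mem _ fun k _ => ?_))
  · simpa using mul_mem_wordLengthComponent (castAddHom_mem_wordLengthComponent (hc i j))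
      (mul_mem_wordLengthComponent (hY i) (hY j))
  · exact mul_mem_wordLengthComponent (castAddHom_mem_wordLengthComponent (hr₁ i j k)) (hY k)

theorem ker_extendHom_eq {R : Subalgebra K A} (b : Module.Basis (Fin n → ℕ) R A)
    (hb : ∀ α, (b α : A) = pbwMonomial x α) (hφR : ∀ v, φ v ∈ R)
    {T : Set (FreeAlgebra K (Fin m))} (hT : (RingHom.ker φ).restrictScalars K = twoSidedSpan K T)
    {σ' δ' : Fin n → Fin m → FreeAlgebra K (Fin m)}
    (hskew : ∀ i k, x i * φ (FreeAlgebra.ι K k) = φ (σ' i k) * x i + φ (δ' i k))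
    {c r₀ : Fin n → Fin n → FreeAlgebra K (Fin m)}
    {r₁ : Fin n → Fin n → Fin n → FreeAlgebra K (Fin m)}
    (hgen : ∀ i j, x j * x i = φ (c i j) * (x i * x j) + φ (r₀ i j) + ∑ k, φ (r₁ i j k) * x k) :
    (RingHom.ker (extendHom φ x)).restrictScalars K = twoSidedSpan K
      (castAddHom K m n '' T ∪ Set.range (Function.uncurry (skewRel K m σ' δ'))
        ∪ Set.range (Function.uncurry (genRel K m c r₀ r₁))) := by
  set S := castAddHom K m n '' T ∪ Set.range (Function.uncurry (skewRel K m σ' δ'))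
    ∪ Set.range (Function.uncurry (genRel K m c r₀ r₁))
  have hkerφ : ∀ v, φ v = 0 ↔ v ∈ twoSidedSpan K T := fun v => by
    rw [← hT]; simp
  refine ker_eq_twoSidedSpan_of_basis (pbwMonomial (natAddGen K m)) (extendHom φ x) b
    (fun α => by rw [hb, extendHom_pbwMonomial])
    (fun v => by rw [extendHom_castAddHom]; exact hφR v)
    (fun v hv => ?_) ?_ fun w => ?_
  · rw [extendHom_castAddHom, hkerφ] at hv
    exact twoSidedSpan_mono (Set.subset_union_left.trans Set.subset_union_left)
      (map_mem_twoSidedSpan_image _ hv)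
  · rintro s ((⟨g, hg, rfl⟩ | ⟨⟨i, k⟩, rfl⟩) | ⟨⟨i, j⟩, rfl⟩)
    · rw [extendHom_castAddHom, hkerφ]
      exact subset_twoSidedSpan hg
    · exact extendHom_skewRel φ x hskew i k
    · exact extendHom_genRel φ x hgen i j
  · obtain ⟨d, hd⟩ := exists_mem_sup_pbwSpan (S := S)
      (fun i => exists_mul_map_sub_mem _ fun k =>
        ⟨σ' i k, δ' i k, subset_twoSidedSpan (Or.inl (Or.inr ⟨(i, k), rfl⟩))⟩)
      (fun i j => ⟨c i j, r₀ i j, r₁ i j, subset_twoSidedSpan (Or.inr ⟨(i, j), rfl⟩)⟩) w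
    exact sup_le_sup_left (pbwSpan_le_range_coeffCombination _ _ d) _ hd

end Presentation

namespace IsGradedSkewPBWExtension

variable {K A : Type*} [Field K] [Ring A] [Algebra K A] {R : Subalgebra K A}
  {RG : ℕ → Submodule K A} {m n : ℕ} {x : Fin n → A} {φ : FreeAlgebra K (Fin m) →ₐ[K] A}

theorem exists_mem_wordLengthComponent_eq (h : IsGradedSkewPBWExtension K R RG x)
    (hrange : Set.range φ = R) (hdeg1 : ∀ k, φ (FreeAlgebra.ι K k) ∈ RG 1) {d : ℕ} {a : A}
    (ha : a ∈ RG d) : ∃ v ∈ wordLengthComponent K m d, φ v = a :=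
  _root_.exists_mem_wordLengthComponent_eq h.grading_indep h.grading_one h.grading_mul φ hdeg1
    ha (hrange ▸ h.grading_le d ha)

theorem exists_skewRel_data (h : IsGradedSkewPBWExtension K R RG x)
    (hrange : Set.range φ = R) (hdeg1 : ∀ k, φ (FreeAlgebra.ι K k) ∈ RG 1) (i : Fin n)
    (k : Fin m) : ∃ σ' ∈ wordLengthComponent K m 1, ∃ δ' ∈ wordLengthComponent K m 2,
      x i * φ (FreeAlgebra.ι K k) = φ σ' * x i + φ δ' := by
  obtain ⟨σ, -, hσ, δ, -, -, hδ, hxr⟩ := h.sigma_delta i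
  let r : R := ⟨φ (FreeAlgebra.ι K k), by rw [← SetLike.mem_coe, ← hrange]; exact ⟨_, rfl⟩⟩
  obtain ⟨σ', hσ', hσ'r⟩ := h.exists_mem_wordLengthComponent_eq hrange hdeg1 (hσ 1 r (hdeg1 k))
  obtain ⟨δ', hδ', hδ'r⟩ := h.exists_mem_wordLengthComponent_eq hrange hdeg1 (hδ 1 r (hdeg1 k))
  exact ⟨σ', hσ', δ', hδ', by rw [hσ'r, hδ'r]; exact hxr r⟩

theorem exists_genRel_data (h : IsGradedSkewPBWExtension K R RG x)
    (hrange : Set.range φ = R) (hdeg1 : ∀ k, φ (FreeAlgebra.ι K k) ∈ RG 1) (i j : Fin n) :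
    ∃ c ∈ wordLengthComponent K m 0, ∃ r₀ ∈ wordLengthComponent K m 2,
      ∃ r₁ : Fin n → FreeAlgebra K (Fin m), (∀ k, r₁ k ∈ wordLengthComponent K m 1) ∧
        x j * x i = φ c * (x i * x j) + φ r₀ + ∑ k, φ (r₁ k) * x k := by
  obtain ⟨c, -, hc, r₀, hr₀, r₁, hr₁, hrel⟩ := h.gens_comm_graded i j
  obtain ⟨c', hc', hc'c⟩ := h.exists_mem_wordLengthComponent_eq hrange hdeg1 hc
  obtain ⟨r₀', hr₀', rfl⟩ := h.exists_mem_wordLengthComponent_eq hrange hdeg1 hr₀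
  choose r₁' hr₁' hr₁'r using fun k => h.exists_mem_wordLengthComponent_eq hrange hdeg1 (hr₁ k)
  refine ⟨c', hc', r₀', hr₀', r₁', hr₁', ?_⟩
  simp only [hr₁'r]
  rw [sub_eq_iff_eq_add.1 hrel, hc'c]
  abel

theorem exists_finset_ker_extendHom_eq (h : IsGradedSkewPBWExtension K R RG x)
    (hrange : Set.range φ = R) (hdeg1 : ∀ k, φ (FreeAlgebra.ι K k) ∈ RG 1)
    (T : Finset (FreeAlgebra K (Fin m)))
    (hT : (RingHom.ker φ).restrictScalars K = twoSidedSpan K (T : Set (FreeAlgebra K (Fin m)))) :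
    ∃ S : Finset (FreeAlgebra K (Fin (m + n))),
      (∀ g ∈ S, g ∈ castAddHom K m n '' T ∨ g ∈ wordLengthComponent K (m + n) 2) ∧
      (RingHom.ker (extendHom φ x)).restrictScalars K = twoSidedSpan K (S : Set _) := by
  classical
  obtain ⟨b, hb⟩ := h.isBasis
  choose σ' hσ' δ' hδ' hskew using h.exists_skewRel_data hrange hdeg1
  choose c hc r₀ hr₀ r₁ hr₁ hgen using h.exists_genRel_data hrange hdeg1
  refine ⟨T.image (castAddHom K m n) ∪ Finset.univ.image (Function.uncurry (skewRel K m σ' δ'))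
    ∪ Finset.univ.image (Function.uncurry (genRel K m c r₀ r₁)), ?_, ?_⟩
  · simp only [Finset.mem_union, Finset.mem_image, Finset.mem_univ, true_and]
    rintro g ((⟨g₀, hg₀, rfl⟩ | ⟨⟨i, k⟩, rfl⟩) | ⟨⟨i, j⟩, rfl⟩)
    · exact Or.inl ⟨g₀, hg₀, rfl⟩
    · exact Or.inr (skewRel_mem_wordLengthComponent hσ' hδ' i k)
    · exact Or.inr (genRel_mem_wordLengthComponent hc hr₀ hr₁ i j)
  · rw [ker_extendHom_eq φ x b hb
      (fun v => by rw [← SetLike.mem_coe, ← hrange]; exact ⟨v, rfl⟩) hT hskew hgen]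
    simp only [Finset.coe_union, Finset.coe_image, Finset.coe_univ, Set.image_univ]

end IsGradedSkewPBWExtension

theorem gradedSkewPBW_finitelyPresented_general
    {K A : Type*} [Field K] [Ring A] [Algebra K A]
    (R : Subalgebra K A) (RG : ℕ → Submodule K A) {n : ℕ} (x : Fin n → A)
    (h : IsGradedSkewPBWExtension K R RG x)
    {m : ℕ} (φ : FreeAlgebra K (Fin m) →ₐ[K] A)
    (hrange : Set.range φ = (R : Set A))
    (hdeg1 : ∀ k : Fin m, φ (FreeAlgebra.ι K k) ∈ RG 1)
    (hker : ∃ T : Finset (FreeAlgebra K (Fin m)),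
      (∀ g ∈ T, ∃ d : ℕ, g ∈ wordLengthComponent K m d) ∧
      (RingHom.ker φ).restrictScalars K = twoSidedSpan K (T : Set (FreeAlgebra K (Fin m)))) :
    ∃ F : FreeAlgebra K (Fin (m + n)) →ₐ[K] A,
      Function.Surjective F ∧
      (∀ k : Fin m, F (FreeAlgebra.ι K (Fin.castAdd n k)) = φ (FreeAlgebra.ι K k)) ∧
      (∀ j : Fin n, F (FreeAlgebra.ι K (Fin.natAdd m j)) = x j) ∧
      (∃ S : Finset (FreeAlgebra K (Fin (m + n))),
        (∀ g ∈ S, ∃ d : ℕ, g ∈ wordLengthComponent K (m + n) d) ∧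
        (RingHom.ker F).restrictScalars K
          = twoSidedSpan K (S : Set (FreeAlgebra K (Fin (m + n))))) ∧
      ((∃ T' : Set (FreeAlgebra K (Fin m)),
          (∀ g ∈ T', g ∈ wordLengthComponent K m 2) ∧
          (RingHom.ker φ).restrictScalars K = twoSidedSpan K T') →
        ∃ S' : Finset (FreeAlgebra K (Fin (m + n))),
          (∀ g ∈ S', g ∈ wordLengthComponent K (m + n) 2) ∧
          (RingHom.ker F).restrictScalars K
            = twoSidedSpan K (S' : Set (FreeAlgebra K (Fin (m + n))))) := by
  obtain ⟨b, hb⟩ := h.isBasis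
  refine ⟨extendHom φ x, extendHom_surjective φ x b hb hrange.ge, extendHom_ι_castAdd φ x,
    extendHom_natAddGen φ x, ?_, ?_⟩
  · obtain ⟨T, hTdeg, hT⟩ := hker
    obtain ⟨S, hSdeg, hS⟩ := h.exists_finset_ker_extendHom_eq hrange hdeg1 T hT
    refine ⟨S, fun g hg => ?_, hS⟩
    rcases hSdeg g hg with ⟨g₀, hg₀, rfl⟩ | hg
    · obtain ⟨d, hd⟩ := hTdeg g₀ hg₀
      exact ⟨d, castAddHom_mem_wordLengthComponent hd⟩
    · exact ⟨2, hg⟩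
  · rintro ⟨T', hT'deg, hT'⟩
    obtain ⟨T, -, hT⟩ := hker
    obtain ⟨T'', hT''T', hT''⟩ := exists_finset_subset_twoSidedSpan_eq (hT.symm.trans hT')
    obtain ⟨S, hSdeg, hS⟩ :=
      h.exists_finset_ker_extendHom_eq hrange hdeg1 T'' (hT'.trans hT''.symm)
    refine ⟨S, fun g hg => ?_, hS⟩
    rcases hSdeg g hg with ⟨g₀, hg₀, rfl⟩ | hg
    · exact castAddHom_mem_wordLengthComponent (hT'deg g₀ (hT''T' hg₀))
    · exact hg

/-- Let `R` be a connected ℕ-graded `K`-algebra with a finite presentation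
`φ : K⟨t₁,…,tₘ⟩ → R`, sending each generator into `R₁`, whose kernel is generated as a
two-sided ideal by finitely many word-length homogeneous elements; and let `A` be a graded
skew PBW extension of `R` with generators `x₁,…,xₙ`. Then `A` is finitely presented: there
is a surjective `F : K⟨y₁,…,y_{m+n}⟩ → A` with `F yₖ = φ tₖ` and `F y_{m+j} = xⱼ` whose
kernel is generated, as a two-sided ideal, by finitely many word-length homogeneous
elements; moreover if `ker φ` is generated by homogeneous elements of degree 2, then
`ker F` is generated by finitely many homogeneous elements of degree 2. -/
theorem gradedSkewPBW_finitelyPresented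
    {K A : Type*} [Field K] [Ring A] [Algebra K A]
    (R : Subalgebra K A) (RG : ℕ → Submodule K A) {n : ℕ} (x : Fin n → A)
    (h : IsGradedSkewPBWExtension K R RG x)
    (hconn : RG 0 = Submodule.span K {(1 : A)})
    {m : ℕ} (φ : FreeAlgebra K (Fin m) →ₐ[K] A)
    (hrange : Set.range φ = (R : Set A))
    (hdeg1 : ∀ k : Fin m, φ (FreeAlgebra.ι K k) ∈ RG 1)
    (hker : ∃ T : Finset (FreeAlgebra K (Fin m)),
      (∀ g ∈ T, ∃ d : ℕ, g ∈ wordLengthComponent K m d) ∧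
      (RingHom.ker φ).restrictScalars K = twoSidedSpan K (T : Set (FreeAlgebra K (Fin m)))) :
    ∃ F : FreeAlgebra K (Fin (m + n)) →ₐ[K] A,
      Function.Surjective F ∧
      (∀ k : Fin m, F (FreeAlgebra.ι K (Fin.castAdd n k)) = φ (FreeAlgebra.ι K k)) ∧
      (∀ j : Fin n, F (FreeAlgebra.ι K (Fin.natAdd m j)) = x j) ∧
      (∃ S : Finset (FreeAlgebra K (Fin (m + n))),
        (∀ g ∈ S, ∃ d : ℕ, g ∈ wordLengthComponent K (m + n) d) ∧
        (RingHom.ker F).restrictScalars K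
          = twoSidedSpan K (S : Set (FreeAlgebra K (Fin (m + n))))) ∧
      ((∃ T' : Set (FreeAlgebra K (Fin m)),
          (∀ g ∈ T', g ∈ wordLengthComponent K m 2) ∧
          (RingHom.ker φ).restrictScalars K = twoSidedSpan K T') →
        ∃ S' : Finset (FreeAlgebra K (Fin (m + n))),
          (∀ g ∈ S', g ∈ wordLengthComponent K (m + n) 2) ∧
          (RingHom.ker F).restrictScalars K
            = twoSidedSpan K (S' : Set (FreeAlgebra K (Fin (m + n))))) :=
  gradedSkewPBW_finitelyPresented_general R RG x h φ hrange hdeg1 hker
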